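/- arXiv:0712.2923 — 2 statements merged into one kernel-verified Lean document; each statement's English description precedes it below -/
import Mathlib

section
/- The operators L_n and U_n are idempotent: for every f : ℤ^d → ℝ, L_n(L_n f) = L_n f and U_n(U_n f) = U_n f. -/
open Set

/-- A connection (connected class) on `ℤ^d`. -/
def IsConnection {d : ℕ} (C : Set (Set (Fin d → ℤ))) : Prop :=
  ∅ ∈ C ∧ (∀ x : Fin d → ℤ, {x} ∈ C) ∧
    ∀ S : Set (Set (Fin d → ℤ)), (∀ A ∈ S, A ∈ C) → (⋂₀ S).Nonempty → ⋃₀ S ∈ C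

/-- A connection on `ℤ^d` satisfying the additional axioms (α), (β), (γ). -/
def GoodConnection {d : ℕ} (C : Set (Set (Fin d → ℤ))) : Prop :=
  IsConnection C ∧
  Set.univ ∈ C ∧
  (∀ (a : Fin d → ℤ), ∀ V ∈ C, (fun x => a + x) '' V ∈ C) ∧
  (∀ V ∈ C, ∀ W ∈ C, V ⊂ W → ∃ x ∈ W \ V, insert x V ∈ C)

/-- `𝒩_n(x)`: the connected sets of cardinality `n+1` containing `x`. -/
def Nn {d : ℕ} (C : Set (Set (Fin d → ℤ))) (n : ℕ) (x : Fin d → ℤ) :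
    Set (Set (Fin d → ℤ)) :=
  {V | V ∈ C ∧ x ∈ V ∧ V.encard = (n : ℕ∞) + 1}

/-- The operator `L_n`. -/
noncomputable def Ln {d : ℕ} (C : Set (Set (Fin d → ℤ))) (n : ℕ)
    (f : (Fin d → ℤ) → ℝ) (x : Fin d → ℤ) : ℝ :=
  sSup ((fun V => sInf (f '' V)) '' Nn C n x)

/-- The operator `U_n`. -/
noncomputable def Un {d : ℕ} (C : Set (Set (Fin d → ℤ))) (n : ℕ)
    (f : (Fin d → ℤ) → ℝ) (x : Fin d → ℤ) : ℝ :=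
  sInf ((fun V => sSup (f '' V)) '' Nn C n x)

/-- The set of points adjacent to `V`. -/
def adjSet {d : ℕ} (C : Set (Set (Fin d → ℤ))) (V : Set (Fin d → ℤ)) :
    Set (Fin d → ℤ) :=
  {x | x ∉ V ∧ insert x V ∈ C}

/-- `V` is a local maximum set of `f`. -/
def IsLocalMaxSet {d : ℕ} (C : Set (Set (Fin d → ℤ))) (f : (Fin d → ℤ) → ℝ)
    (V : Set (Fin d → ℤ)) : Prop :=
  V ∈ C ∧ V.Finite ∧ V.Nonempty ∧ ∀ y ∈ adjSet C V, ∀ z ∈ V, f y < f z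

/-- `V` is a local minimum set of `f`. -/
def IsLocalMinSet {d : ℕ} (C : Set (Set (Fin d → ℤ))) (f : (Fin d → ℤ) → ℝ)
    (V : Set (Fin d → ℤ)) : Prop :=
  V ∈ C ∧ V.Finite ∧ V.Nonempty ∧ ∀ y ∈ adjSet C V, ∀ z ∈ V, f z < f y

open Set

section Aux
variable {d : ℕ} {C : Set (Set (Fin d → ℤ))} {n : ℕ} {x y : Fin d → ℤ}
  {V : Set (Fin d → ℤ)} {f : (Fin d → ℤ) → ℝ}

lemma mem_Nn_of_mem (h : V ∈ Nn C n x) (hy : y ∈ V) : V ∈ Nn C n y :=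
  ⟨h.1, hy, h.2.2⟩

lemma Nn_finite (h : V ∈ Nn C n x) : V.Finite :=
  Set.finite_of_encard_eq_coe (show V.encard = ((n+1:ℕ):ℕ∞) by rw [h.2.2]; push_cast; ring)

lemma Nn_nonempty (hd : 1 ≤ d) (hC : GoodConnection C) : (Nn C n x).Nonempty := by
  haveI : Nonempty (Fin d) := ⟨⟨0, hd⟩⟩
  have key : ∀ k : ℕ, ∃ V, V ∈ C ∧ x ∈ V ∧ V.encard = (k : ℕ∞) + 1 := by
    intro k
    induction k with
    | zero => exact ⟨{x}, hC.1.2.1 x, rfl, by simp⟩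
    | succ k ih =>
      obtain ⟨V, hVC, hxV, hcard⟩ := ih
      have hVfin : V.Finite :=
        Set.finite_of_encard_eq_coe (show V.encard = ((k+1:ℕ):ℕ∞) by rw [hcard]; push_cast; ring)
      have hne : V ≠ Set.univ := by
        intro h; exact Set.infinite_univ (h ▸ hVfin)
      obtain ⟨z, hz, hins⟩ := hC.2.2.2 V hVC Set.univ hC.2.1 (Set.ssubset_univ_iff.mpr hne)
      refine ⟨insert z V, hins, Set.mem_insert_of_mem _ hxV, ?_⟩
      rw [Set.encard_insert_of_notMem hz.2, hcard]
      push_cast; ring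
  obtain ⟨V, h1, h2, h3⟩ := key n
  exact ⟨V, h1, h2, h3⟩

lemma sInf_image_le_apply (h : V ∈ Nn C n x) (hy : y ∈ V) : sInf (f '' V) ≤ f y :=
  csInf_le ((Nn_finite h).image f).bddBelow ⟨y, hy, rfl⟩

lemma apply_le_sSup_image (h : V ∈ Nn C n x) (hy : y ∈ V) : f y ≤ sSup (f '' V) :=
  le_csSup ((Nn_finite h).image f).bddAbove ⟨y, hy, rfl⟩

lemma bddAbove_Ln_set : BddAbove ((fun V => sInf (f '' V)) '' Nn C n x) := by
  refine ⟨f x, ?_⟩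
  rintro a ⟨V, hV, rfl⟩
  exact sInf_image_le_apply hV hV.2.1

lemma bddBelow_Un_set : BddBelow ((fun V => sSup (f '' V)) '' Nn C n x) := by
  refine ⟨f x, ?_⟩
  rintro a ⟨V, hV, rfl⟩
  exact apply_le_sSup_image hV hV.2.1

lemma sInf_le_Ln (h : V ∈ Nn C n x) : sInf (f '' V) ≤ Ln C n f x :=
  le_csSup bddAbove_Ln_set ⟨V, h, rfl⟩

lemma Un_le_sSup (h : V ∈ Nn C n x) : Un C n f x ≤ sSup (f '' V) :=
  csInf_le bddBelow_Un_set ⟨V, h, rfl⟩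

lemma Ln_le_self (hd : 1 ≤ d) (hC : GoodConnection C) : Ln C n f x ≤ f x := by
  refine csSup_le ((Nn_nonempty hd hC).image _) ?_
  rintro a ⟨V, hV, rfl⟩
  exact sInf_image_le_apply hV hV.2.1

lemma self_le_Un (hd : 1 ≤ d) (hC : GoodConnection C) : f x ≤ Un C n f x := by
  refine le_csInf ((Nn_nonempty hd hC).image _) ?_
  rintro a ⟨V, hV, rfl⟩
  exact apply_le_sSup_image hV hV.2.1

end Aux

/-- `L_n` and `U_n` are idempotent. -/
theorem Ln_Un_idempotent {d : ℕ} (hd : 1 ≤ d)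
    (C : Set (Set (Fin d → ℤ))) (hC : GoodConnection C)
    (n : ℕ) (hn : 1 ≤ n) (f : (Fin d → ℤ) → ℝ) :
    Ln C n (Ln C n f) = Ln C n f ∧ Un C n (Un C n f) = Un C n f := by
  constructor
  · funext x
    apply le_antisymm (Ln_le_self hd hC)
    refine csSup_le ((Nn_nonempty hd hC).image _) ?_
    rintro a ⟨V, hV, rfl⟩
    have h1 : sInf (f '' V) ≤ sInf (Ln C n f '' V) := by
      refine le_csInf (Set.Nonempty.image _ ⟨x, hV.2.1⟩) ?_
      rintro b ⟨y, hy, rfl⟩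
      exact sInf_le_Ln (mem_Nn_of_mem hV hy)
    exact h1.trans (sInf_le_Ln hV)
  · funext x
    apply le_antisymm
    · refine le_csInf ((Nn_nonempty hd hC).image _) ?_
      rintro a ⟨V, hV, rfl⟩
      have h1 : sSup (Un C n f '' V) ≤ sSup (f '' V) := by
        refine csSup_le (Set.Nonempty.image _ ⟨x, hV.2.1⟩) ?_
        rintro b ⟨y, hy, rfl⟩
        exact Un_le_sSup (mem_Nn_of_mem hV hy)
      exact (Un_le_sSup hV).trans h1
    · exact self_le_Un hd hC
end

section
/- For every f : ℤ^d → ℝ and x ∈ ℤ^d: U_n f(x) > f(x) if and only if there exists a local minimum set V of f with x ∈ V and card(V) ≤ n. -/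
open Set

section Aux

variable {d : ℕ} {C : Set (Set (Fin d → ℤ))}

lemma aux_infinite (hd : 1 ≤ d) : Infinite (Fin d → ℤ) := by
  have : Nonempty (Fin d) := ⟨⟨0, hd⟩⟩
  infer_instance

/-- Any finite connected set can be grown by one point. -/
lemma aux_grow (hd : 1 ≤ d) (hC : GoodConnection C) {V : Set (Fin d → ℤ)}
    (hV : V ∈ C) (hfin : V.Finite) : ∃ y ∉ V, insert y V ∈ C := by
  have : Infinite (Fin d → ℤ) := aux_infinite hd
  have hss : V ⊂ Set.univ := by
    refine Set.ssubset_univ_iff.mpr ?_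
    intro h
    exact (h ▸ Set.infinite_univ) hfin
  obtain ⟨y, hy, hins⟩ := hC.2.2.2 V hV Set.univ hC.2.1 hss
  exact ⟨y, hy.2, hins⟩

/-- For each `k` there is a connected set of cardinality `k+1` containing `x`. -/
lemma aux_exists_conn (hd : 1 ≤ d) (hC : GoodConnection C) (x : Fin d → ℤ) :
    ∀ k : ℕ, ∃ V ∈ C, x ∈ V ∧ V.Finite ∧ V.encard = (k : ℕ∞) + 1 := by
  intro k
  induction k with
  | zero =>
    exact ⟨{x}, hC.1.2.1 x, rfl, Set.finite_singleton x, by simp⟩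
  | succ k ih =>
    obtain ⟨V, hVC, hxV, hVfin, hVcard⟩ := ih
    obtain ⟨y, hyV, hins⟩ := aux_grow hd hC hVC hVfin
    refine ⟨insert y V, hins, Set.mem_insert_of_mem y hxV, hVfin.insert y, ?_⟩
    rw [Set.encard_insert_of_notMem hyV, hVcard]
    push_cast
    ring

end Aux

/-- `U_n f(x) > f(x)` iff there is a local minimum set `V` of `f`
with `x ∈ V` and `card(V) ≤ n`. -/
theorem Un_gt_iff_localMinSet {d : ℕ} (hd : 1 ≤ d)
    (C : Set (Set (Fin d → ℤ))) (hC : GoodConnection C)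
    (hadj : ∀ V ∈ C, V.Finite → (adjSet C V).Finite)
    (n : ℕ) (hn : 1 ≤ n) (f : (Fin d → ℤ) → ℝ) (x : Fin d → ℤ) :
    f x < Un C n f x ↔
      ∃ V, IsLocalMinSet C f V ∧ x ∈ V ∧ V.encard ≤ (n : ℕ∞) := by
  constructor
  · -- forward direction, by contradiction
    intro h
    by_contra hno
    push_neg at hno
    -- build, for every k ≤ n, a connected set of size k+1 containing x on which f ≤ f x
    have key : ∀ k : ℕ, k + 1 ≤ n + 1 →
        ∃ W ∈ C, x ∈ W ∧ W.Finite ∧ W.encard = (k : ℕ∞) + 1 ∧ ∀ z ∈ W, f z ≤ f x := by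
      intro k
      induction k with
      | zero =>
        exact fun _ => ⟨{x}, hC.1.2.1 x, rfl, Set.finite_singleton x, by simp,
          by rintro z rfl; exact le_rfl⟩
      | succ k ih =>
        intro hk
        obtain ⟨W, hWC, hxW, hWfin, hWcard, hWle⟩ := ih (by omega)
        have hcard_le : W.encard ≤ (n : ℕ∞) := by
          rw [hWcard]
          have : ((k : ℕ∞) + 1) = ((k + 1 : ℕ) : ℕ∞) := by push_cast; ring
          rw [this]
          exact_mod_cast (by omega : k + 1 ≤ n)
        have hnotmin : ¬ (∀ y ∈ adjSet C W, ∀ z ∈ W, f z < f y) := by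
          intro hloc
          exact absurd hcard_le (not_le.mpr (hno W ⟨hWC, hWfin, ⟨x, hxW⟩, hloc⟩ hxW))
        push_neg at hnotmin
        obtain ⟨y, hyadj, z, hzW, hfyz⟩ := hnotmin
        refine ⟨insert y W, hyadj.2, Set.mem_insert_of_mem y hxW, hWfin.insert y, ?_, ?_⟩
        · rw [Set.encard_insert_of_notMem hyadj.1, hWcard]
          push_cast
          ring
        · rintro w (rfl | hw)
          · exact le_trans hfyz (hWle z hzW)
          · exact hWle w hw
    obtain ⟨W, hWC, hxW, hWfin, hWcard, hWle⟩ := key n le_rfl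
    -- the image set defining Un
    have hWmem : W ∈ Nn C n x := ⟨hWC, hxW, hWcard⟩
    have hbdd : ∀ a ∈ (fun V => sSup (f '' V)) '' Nn C n x, f x ≤ a := by
      rintro a ⟨V, ⟨hVC, hxV, hVcard⟩, rfl⟩
      have hVfin : V.Finite := by
        refine Set.finite_of_encard_eq_coe (?_ : V.encard = ((n + 1 : ℕ) : ℕ∞))
        rw [hVcard]; push_cast; ring
      exact le_csSup ((hVfin.image f).bddAbove) (Set.mem_image_of_mem f hxV)
    have h1 : Un C n f x ≤ sSup (f '' W) :=
      csInf_le ⟨f x, hbdd⟩ (Set.mem_image_of_mem _ hWmem)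
    have h2 : sSup (f '' W) ≤ f x := by
      apply csSup_le ⟨f x, Set.mem_image_of_mem f hxW⟩
      rintro b ⟨z, hz, rfl⟩
      exact hWle z hz
    linarith
  · -- backward direction
    rintro ⟨V, ⟨hVC, hVfin, hVne, hVlt⟩, hxV, hVcard⟩
    obtain ⟨y₀, hy₀V, hy₀ins⟩ := aux_grow hd hC hVC hVfin
    have hy₀adj : y₀ ∈ adjSet C V := ⟨hy₀V, hy₀ins⟩
    have hadjfin : (adjSet C V).Finite := hadj V hVC hVfin
    have hAne : (f '' adjSet C V).Nonempty := ⟨f y₀, Set.mem_image_of_mem f hy₀adj⟩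
    set m : ℝ := sInf (f '' adjSet C V) with hm
    have hmmem : m ∈ f '' adjSet C V := hAne.csInf_mem (hadjfin.image f)
    have hfxm : f x < m := by
      obtain ⟨a, ha, hfa⟩ := hmmem
      rw [← hfa]
      exact hVlt a ha x hxV
    -- every W ∈ Nn C n x meets adjSet C V
    have hub : ∀ a ∈ (fun V => sSup (f '' V)) '' Nn C n x, m ≤ a := by
      rintro a ⟨W, ⟨hWC, hxW, hWcard⟩, rfl⟩
      have hWfin : W.Finite := by
        refine Set.finite_of_encard_eq_coe (?_ : W.encard = ((n + 1 : ℕ) : ℕ∞))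
        rw [hWcard]; push_cast; ring
      -- V ∪ W ∈ C
      have hunion : V ∪ W ∈ C := by
        have := hC.1.2.2 {V, W} (by rintro A (rfl | rfl) <;> assumption)
          ⟨x, by rw [Set.sInter_pair]; exact ⟨hxV, hxW⟩⟩
        rwa [Set.sUnion_pair] at this
      -- W is not contained in V
      have hnsub : ¬ W ⊆ V := by
        intro hsub
        have h1 : W.encard ≤ V.encard := Set.encard_mono hsub
        rw [hWcard] at h1
        have h2 : ((n + 1 : ℕ) : ℕ∞) ≤ (n : ℕ∞) := by
          refine le_trans (le_of_eq ?_) (h1.trans hVcard)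
          push_cast; ring
        have : n + 1 ≤ n := by exact_mod_cast h2
        omega
      obtain ⟨w, hwW, hwV⟩ := Set.not_subset.mp hnsub
      have hss : V ⊂ V ∪ W :=
        ⟨Set.subset_union_left, fun hsub => hwV (hsub (Or.inr hwW))⟩
      obtain ⟨y, hy, hyins⟩ := hC.2.2.2 V hVC (V ∪ W) hunion hss
      have hyW : y ∈ W := hy.1.resolve_left hy.2
      have hyadj : y ∈ adjSet C V := ⟨hy.2, hyins⟩
      calc m ≤ f y := csInf_le (hadjfin.image f).bddBelow (Set.mem_image_of_mem f hyadj)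
        _ ≤ sSup (f '' W) := le_csSup ((hWfin.image f).bddAbove) (Set.mem_image_of_mem f hyW)
    have hne : ((fun V => sSup (f '' V)) '' Nn C n x).Nonempty := by
      obtain ⟨W, hWC, hxW, hWfin, hWcard⟩ := aux_exists_conn hd hC x n
      exact ⟨_, Set.mem_image_of_mem _ (⟨hWC, hxW, hWcard⟩ : W ∈ Nn C n x)⟩
    have : m ≤ Un C n f x := le_csInf hne hub
    linarith
end
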